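/- Let X | W ~ N(0, ν/W) with W ~ χ²_ν (so X is Student's t with ν degrees of freedom), and let Y ~ N(0, σ²) with σ² > 0 be independent of (X, W). Then Z = X + Y is not Student's t with any degrees of freedom ν' > 0. -/

import Mathlib

open MeasureTheory ProbabilityTheory Real
open scoped NNReal

/-- The Student's `t` distribution with `ν` degrees of freedom (location 0, scale 1),
given by its density with respect to Lebesgue measure. -/
noncomputable def studentTMeasure (ν : ℝ) : Measure ℝ :=
  volume.withDensity fun x =>
    ENNReal.ofReal (Real.Gamma ((ν + 1) / 2) / (Real.sqrt (ν * Real.pi) * Real.Gamma (ν / 2)) *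
      (1 + x ^ 2 / ν) ^ (-((ν + 1) / 2)))

/-!
A Student `t_ν` law has a power-law upper tail, `P(X > x) ≍ x^(-ν)`, while a Gaussian tail is
`O(x^(-r))` for every `r`. The inclusions `{X > x + c} ∩ {Y > -c} ⊆ {X + Y > x}` (with
independence) and `{X + Y > x} ⊆ {X > x/2} ∪ {Y > x/2}` show that `X + Y` again has tail
`≍ x^(-ν)`, which forces `ν' = ν`. That case is excluded by characteristic functions: if
`φ = φ · exp(-v t²/2)` with `v > 0`, then `φ` vanishes off `0`, contradicting continuity and
`φ(0) = 1`.
-/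

open Set Filter Asymptotics

lemma isLittleO_rpow_rpow_atTop {a b : ℝ} (hab : a < b) :
    (fun x : ℝ => x ^ a) =o[atTop] fun x => x ^ b := by
  refine (isLittleO_iff_tendsto' ?_).2 ?_
  · filter_upwards [eventually_gt_atTop 0] with x hx h
    exact absurd h (Real.rpow_pos_of_pos hx _).ne'
  · refine (tendsto_rpow_neg_atTop (sub_pos.2 hab)).congr' ?_
    filter_upwards [eventually_gt_atTop 0] with x hx
    rw [← Real.rpow_sub hx, neg_sub]

lemma isTheta_rpow_atTop_iff {a b : ℝ} :
    ((fun x : ℝ => x ^ a) =Θ[atTop] fun x => x ^ b) ↔ a = b := by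
  refine ⟨fun h => ?_, fun h => h ▸ isTheta_rfl⟩
  have hne : ∀ c : ℝ, ∃ᶠ x : ℝ in atTop, x ^ c ≠ 0 := fun c =>
    ((eventually_gt_atTop 0).mono fun x hx => (Real.rpow_pos_of_pos hx c).ne').frequently
  rcases lt_trichotomy a b with hab | hab | hab
  · exact absurd h.2 ((isLittleO_rpow_rpow_atTop hab).not_isBigO (hne a))
  · exact hab
  · exact absurd h.1 ((isLittleO_rpow_rpow_atTop hab).not_isBigO (hne b))

lemma isTheta_rpow_comp_add (c r : ℝ) :
    (fun x : ℝ => (x + c) ^ r) =Θ[atTop] fun x => x ^ r := by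
  have h : (fun x : ℝ => x + c) ~[atTop] id :=
    IsEquivalent.refl.add_isLittleO (isLittleO_const_id_atTop c)
  exact h.isTheta.rpow ((eventually_ge_atTop (-c)).mono fun x hx => by simp; linarith)
    ((eventually_ge_atTop 0).mono fun x hx => hx)

lemma isTheta_rpow_comp_div {c : ℝ} (hc : 0 < c) (r : ℝ) :
    (fun x : ℝ => (x / c) ^ r) =Θ[atTop] fun x => x ^ r := by
  have h : (fun x : ℝ => x / c) =Θ[atTop] fun x => x := by
    simpa only [div_eq_inv_mul] using (isTheta_refl (fun x : ℝ => x) atTop).const_mul_left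
      (inv_ne_zero hc.ne')
  exact h.rpow ((eventually_ge_atTop 0).mono fun x hx => by simp; positivity)
    ((eventually_ge_atTop 0).mono fun x hx => hx)

-- `ρ.real` is `0` on sets of infinite measure: lower bounds on `upperTail` need finiteness.
noncomputable def upperTail (ρ : Measure ℝ) (x : ℝ) : ℝ := ρ.real (Ioi x)

lemma upperTail_nonneg (ρ : Measure ℝ) (x : ℝ) : 0 ≤ upperTail ρ x := measureReal_nonneg

section PowerLawDensity

variable {f : ℝ → ℝ} {a x c : ℝ}

lemma lintegral_Ioi_rpow_neg (ha : 0 < a) (hx : 0 < x) (hc : 0 ≤ c) :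
    ∫⁻ t in Ioi x, ENNReal.ofReal (c * t ^ (-(a + 1))) = ENNReal.ofReal (c * x ^ (-a) / a) := by
  have hint : IntegrableOn (fun t : ℝ => c * t ^ (-(a + 1))) (Ioi x) :=
    (integrableOn_Ioi_rpow_of_lt (by linarith) hx).const_mul c
  rw [← ofReal_integral_eq_lintegral_ofReal hint, integral_const_mul,
    integral_Ioi_rpow_of_lt (by linarith) hx]
  · congr 1
    rw [show -(a + 1) + 1 = -a by ring]
    ring
  · filter_upwards [ae_restrict_mem measurableSet_Ioi] with t (ht : x < t)
    have := hx.trans ht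
    positivity

lemma withDensity_Ioi_le (ha : 0 < a) (hx : 0 < x) (hc : 0 ≤ c)
    (hf : ∀ t > x, f t ≤ c * t ^ (-(a + 1))) :
    volume.withDensity (fun t => ENNReal.ofReal (f t)) (Ioi x) ≤
      ENNReal.ofReal (c * x ^ (-a) / a) := by
  rw [withDensity_apply _ measurableSet_Ioi, ← lintegral_Ioi_rpow_neg ha hx hc]
  exact setLIntegral_mono' measurableSet_Ioi fun t ht => ENNReal.ofReal_le_ofReal (hf t ht)

lemma le_withDensity_Ioi (ha : 0 < a) (hx : 0 < x) (hc : 0 ≤ c)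
    (hf : ∀ t > x, c * t ^ (-(a + 1)) ≤ f t) :
    ENNReal.ofReal (c * x ^ (-a) / a) ≤
      volume.withDensity (fun t => ENNReal.ofReal (f t)) (Ioi x) := by
  rw [withDensity_apply _ measurableSet_Ioi, ← lintegral_Ioi_rpow_neg ha hx hc]
  exact setLIntegral_mono' measurableSet_Ioi fun t ht => ENNReal.ofReal_le_ofReal (hf t ht)

lemma upperTail_withDensity_isTheta (ha : 0 < a) (hf_nonneg : 0 ≤ᶠ[atTop] f)
    (hf : f =Θ[atTop] fun t => t ^ (-(a + 1))) :
    upperTail (volume.withDensity fun t => ENNReal.ofReal (f t)) =Θ[atTop] fun x => x ^ (-a) := by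
  obtain ⟨c₁, hc₁, h₁⟩ := hf.1.exists_pos
  obtain ⟨c₂, hc₂, h₂⟩ := hf.2.exists_pos
  have hup : ∀ᶠ x in atTop, ∀ t ≥ x, f t ≤ c₁ * t ^ (-(a + 1)) := by
    refine eventually_forall_ge_atTop.2 ?_
    filter_upwards [h₁.bound, eventually_gt_atTop 0] with t ht ht0
    rw [Real.norm_of_nonneg (Real.rpow_nonneg ht0.le _)] at ht
    exact (Real.le_norm_self _).trans ht
  have hlow : ∀ᶠ x in atTop, ∀ t ≥ x, c₂⁻¹ * t ^ (-(a + 1)) ≤ f t := by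
    refine eventually_forall_ge_atTop.2 ?_
    filter_upwards [h₂.bound, hf_nonneg, eventually_gt_atTop 0] with t ht hft ht0
    rw [Real.norm_of_nonneg (Real.rpow_nonneg ht0.le _), Real.norm_of_nonneg hft] at ht
    rwa [inv_mul_le_iff₀ hc₂]
  set ρ := volume.withDensity fun t => ENNReal.ofReal (f t)
  have hfin : ∀ᶠ x in atTop, 0 < x ∧ ρ (Ioi x) ≤ ENNReal.ofReal (c₁ * x ^ (-a) / a) := by
    filter_upwards [hup, eventually_gt_atTop 0] with x hx hx0
    exact ⟨hx0, withDensity_Ioi_le ha hx0 hc₁.le fun t ht => hx t (le_of_lt ht)⟩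
  constructor
  · refine IsBigO.of_bound (c₁ / a) ?_
    filter_upwards [hfin] with x ⟨hx0, hx⟩
    rw [Real.norm_of_nonneg (upperTail_nonneg _ _), Real.norm_of_nonneg (Real.rpow_nonneg hx0.le _),
      div_mul_eq_mul_div]
    exact ENNReal.toReal_le_of_le_ofReal (by positivity) hx
  · refine IsBigO.of_bound (c₂ * a) ?_
    filter_upwards [hfin, hlow] with x ⟨hx0, hx⟩ hx'
    rw [Real.norm_of_nonneg (upperTail_nonneg _ _), Real.norm_of_nonneg (Real.rpow_nonneg hx0.le _)]
    have := (ENNReal.ofReal_le_iff_le_toReal (ne_top_of_le_ne_top ENNReal.ofReal_ne_top hx)).1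
      (le_withDensity_Ioi ha hx0 (inv_pos.2 hc₂).le fun t ht => hx' t (le_of_lt ht))
    calc x ^ (-a) = c₂ * a * (c₂⁻¹ * x ^ (-a) / a) := by field_simp
      _ ≤ c₂ * a * upperTail ρ x := by gcongr; exact this

end PowerLawDensity

noncomputable def studentTDensity (ν x : ℝ) : ℝ :=
  Real.Gamma ((ν + 1) / 2) / (Real.sqrt (ν * Real.pi) * Real.Gamma (ν / 2)) *
    (1 + x ^ 2 / ν) ^ (-((ν + 1) / 2))

lemma studentTMeasure_eq_withDensity (ν : ℝ) :
    studentTMeasure ν = volume.withDensity fun x => ENNReal.ofReal (studentTDensity ν x) := rfl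

section StudentT

variable {ν : ℝ}

lemma studentT_normalizer_pos (hν : 0 < ν) :
    0 < Real.Gamma ((ν + 1) / 2) / (Real.sqrt (ν * Real.pi) * Real.Gamma (ν / 2)) := by
  have := Real.Gamma_pos_of_pos (by linarith : 0 < (ν + 1) / 2)
  have := Real.Gamma_pos_of_pos (by linarith : 0 < ν / 2)
  positivity

lemma studentTDensity_nonneg (hν : 0 < ν) (x : ℝ) : 0 ≤ studentTDensity ν x := by
  have := studentT_normalizer_pos hν
  unfold studentTDensity
  positivity

lemma studentTDensity_isTheta (hν : 0 < ν) :
    studentTDensity ν =Θ[atTop] fun x => x ^ (-(ν + 1)) := by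
  have hbase : (fun x : ℝ => 1 + x ^ 2 / ν) =Θ[atTop] fun x => x ^ 2 := by
    have hsq : Tendsto (fun x : ℝ => x ^ 2 / ν) atTop atTop :=
      (tendsto_pow_atTop two_ne_zero).atTop_div_const hν
    have hequiv : (fun x : ℝ => x ^ 2 / ν + 1) ~[atTop] fun x => x ^ 2 / ν :=
      IsEquivalent.refl.add_isLittleO
        (isLittleO_const_left.2 (.inr (tendsto_norm_atTop_atTop.comp hsq)))
    simp only [add_comm (1 : ℝ)]
    refine hequiv.isTheta.trans ?_
    simpa only [div_eq_inv_mul] using (isTheta_refl (fun x : ℝ => x ^ 2) atTop).const_mul_left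
      (inv_ne_zero hν.ne')
  have hpow := hbase.rpow (r := -((ν + 1) / 2)) (.of_forall fun x => by positivity)
    (.of_forall fun x => by positivity)
  refine (hpow.const_mul_left (studentT_normalizer_pos hν).ne').trans_eventuallyEq ?_
  filter_upwards [eventually_ge_atTop 0] with x hx
  rw [← Real.rpow_natCast, ← Real.rpow_mul hx]
  ring_nf

lemma upperTail_studentTMeasure_isTheta (hν : 0 < ν) :
    upperTail (studentTMeasure ν) =Θ[atTop] fun x => x ^ (-ν) := by
  rw [studentTMeasure_eq_withDensity]
  exact upperTail_withDensity_isTheta hν (.of_forall (studentTDensity_nonneg hν))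
    (studentTDensity_isTheta hν)

end StudentT

lemma upperTail_isBigO_exp_neg {τ : Measure ℝ} [IsFiniteMeasure τ] {s : ℝ} (hs : 0 ≤ s)
    (h_int : Integrable (fun y => Real.exp (s * y)) τ) :
    upperTail τ =O[atTop] fun x => Real.exp (-s * x) := by
  refine IsBigO.of_bound (mgf id τ s) (.of_forall fun x => ?_)
  rw [Real.norm_of_nonneg (upperTail_nonneg _ _), Real.norm_of_nonneg (Real.exp_pos _).le,
    mul_comm]
  calc upperTail τ x ≤ τ.real {y | x ≤ id y} := measureReal_mono fun y (hy : x < y) => hy.le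
    _ ≤ _ := measure_ge_le_exp_mul_mgf x hs h_int

lemma upperTail_gaussianReal_isBigO (m : ℝ) (v : ℝ≥0) (r : ℝ) :
    upperTail (gaussianReal m v) =O[atTop] fun x => x ^ r :=
  (upperTail_isBigO_exp_neg zero_le_one (integrable_exp_mul_gaussianReal 1)).trans
    (isLittleO_exp_neg_mul_rpow_atTop one_pos r).isBigO

lemma conv_gaussianReal_ne_self (ρ : Measure ℝ) [IsProbabilityMeasure ρ] (m : ℝ) {v : ℝ≥0}
    (hv : v ≠ 0) : ρ ∗ gaussianReal m v ≠ ρ := by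
  intro h
  have hzero : ∀ t ∈ ({0}ᶜ : Set ℝ), charFun ρ t = 0 := by
    intro t ht
    have hfix : charFun ρ t * charFun (gaussianReal m v) t = charFun ρ t := by
      rw [← charFun_conv, h]
    have hlt : ‖charFun (gaussianReal m v) t‖ < 1 := by
      have hvt : (0 : ℝ) < v * t ^ 2 := by have : t ≠ 0 := ht; positivity
      rw [charFun_gaussianReal, Complex.norm_exp, Real.exp_lt_one_iff]
      simpa [← Complex.ofReal_pow] using hvt
    by_contra hne
    simp [(mul_eq_left₀ hne).1 hfix] at hlt
  have := Continuous.ext_on (dense_compl_singleton 0) continuous_charFun continuous_const hzero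
  simpa using congrFun this 0

lemma exists_upperTail_pos (ρ : Measure ℝ) [IsProbabilityMeasure ρ] :
    ∃ c, 0 < upperTail ρ (-c) := by
  by_contra! h
  have hnull : ∀ n : ℕ, ρ (Ioi (-(n : ℝ))) = 0 := fun n =>
    (measureReal_eq_zero_iff).1 (le_antisymm (h n) measureReal_nonneg)
  have hcover : ⋃ n : ℕ, Ioi (-(n : ℝ)) = univ :=
    eq_univ_of_forall fun y => mem_iUnion.2 ((exists_nat_gt (-y)).imp fun n hn => by
      simp only [mem_Ioi]; linarith)
  simpa [hcover] using measure_iUnion_null hnull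

section Sum

variable {Ω : Type*} [MeasurableSpace Ω] {μ : Measure Ω} {X Y : Ω → ℝ}

lemma upperTail_map {Z : Ω → ℝ} (hZ : Measurable Z) (x : ℝ) :
    upperTail (μ.map Z) x = μ.real (Z ⁻¹' Ioi x) :=
  map_measureReal_apply hZ measurableSet_Ioi

lemma upperTail_map_add_le [IsFiniteMeasure μ] (hX : Measurable X) (hY : Measurable Y) (x : ℝ) :
    upperTail (μ.map fun ω => X ω + Y ω) x ≤
      upperTail (μ.map X) (x / 2) + upperTail (μ.map Y) (x / 2) := by
  rw [upperTail_map (Z := fun ω => X ω + Y ω) (hX.add hY), upperTail_map hX, upperTail_map hY]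
  refine (measureReal_mono fun ω (hω : x < X ω + Y ω) => ?_).trans (measureReal_union_le _ _)
  by_contra h
  simp only [mem_union, mem_preimage, mem_Ioi, not_or, not_lt] at h
  linarith

lemma upperTail_mul_upperTail_le_upperTail_map_add [IsFiniteMeasure μ] (hX : Measurable X)
    (hY : Measurable Y) (hXY : IndepFun X Y μ) (x c : ℝ) :
    upperTail (μ.map X) (x + c) * upperTail (μ.map Y) (-c) ≤
      upperTail (μ.map fun ω => X ω + Y ω) x := by
  rw [upperTail_map (Z := fun ω => X ω + Y ω) (hX.add hY), upperTail_map hX, upperTail_map hY,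
    measureReal_def, measureReal_def,
    ← ENNReal.toReal_mul,
    ← hXY.measure_inter_preimage_eq_mul _ _ measurableSet_Ioi measurableSet_Ioi,
    ← measureReal_def]
  refine measureReal_mono fun ω ⟨(h₁ : x + c < X ω), (h₂ : -c < Y ω)⟩ => ?_
  show x < X ω + Y ω
  linarith

lemma upperTail_map_add_isBigO [IsFiniteMeasure μ] (hX : Measurable X) (hY : Measurable Y)
    {r : ℝ} (hXr : upperTail (μ.map X) =O[atTop] fun x => x ^ r)
    (hYr : upperTail (μ.map Y) =O[atTop] fun x => x ^ r) :
    upperTail (μ.map fun ω => X ω + Y ω) =O[atTop] fun x => x ^ r := by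
  have hhalf : Tendsto (fun x : ℝ => x / 2) atTop atTop := tendsto_id.atTop_div_const two_pos
  have hsum := (hXr.comp_tendsto hhalf).add (hYr.comp_tendsto hhalf)
  refine (IsBigO.of_bound 1 (.of_forall fun x => ?_)).trans
    (hsum.trans (isTheta_rpow_comp_div two_pos r).isBigO)
  rw [one_mul, Real.norm_of_nonneg (upperTail_nonneg _ _)]
  exact (upperTail_map_add_le hX hY x).trans (Real.le_norm_self _)

lemma rpow_isBigO_upperTail_map_add [IsProbabilityMeasure μ] (hX : Measurable X)
    (hY : Measurable Y) (hXY : IndepFun X Y μ) {r : ℝ}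
    (hXr : (fun x => x ^ r) =O[atTop] upperTail (μ.map X)) :
    (fun x => x ^ r) =O[atTop] upperTail (μ.map fun ω => X ω + Y ω) := by
  have := Measure.isProbabilityMeasure_map (μ := μ) hY.aemeasurable
  obtain ⟨c, hc⟩ := exists_upperTail_pos (μ.map Y)
  have hshift : Tendsto (fun x : ℝ => x + c) atTop atTop :=
    tendsto_atTop_add_const_right _ c tendsto_id
  refine (isTheta_rpow_comp_add c r).symm.isBigO.trans ((hXr.comp_tendsto hshift).trans ?_)
  refine IsBigO.of_bound (upperTail (μ.map Y) (-c))⁻¹ (.of_forall fun x => ?_)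
  rw [Function.comp_apply, Real.norm_of_nonneg (upperTail_nonneg _ _),
    Real.norm_of_nonneg (upperTail_nonneg _ _), ← div_eq_inv_mul, le_div_iff₀ hc]
  exact upperTail_mul_upperTail_le_upperTail_map_add hX hY hXY x c

lemma upperTail_map_add_isTheta [IsProbabilityMeasure μ] (hX : Measurable X) (hY : Measurable Y)
    (hXY : IndepFun X Y μ) {r : ℝ} (hXr : upperTail (μ.map X) =Θ[atTop] fun x => x ^ r)
    (hYr : upperTail (μ.map Y) =O[atTop] fun x => x ^ r) :
    upperTail (μ.map fun ω => X ω + Y ω) =Θ[atTop] fun x => x ^ r :=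
  ⟨upperTail_map_add_isBigO hX hY hXr.1 hYr, rpow_isBigO_upperTail_map_add hX hY hXY hXr.2⟩

end Sum

/-- Let `X` be Student's `t` with `ν > 0` degrees of freedom (i.e. `X | W ~ N(0, ν/W)` with
`W ~ χ²_ν`), and let `Y ~ N(0, v)` with `v > 0` be independent of `X`. Then `Z = X + Y` is
not Student's `t` with any degrees of freedom `ν' > 0`. -/
theorem stmt_8 {Ω : Type*} [MeasurableSpace Ω] (μ : Measure Ω) [IsProbabilityMeasure μ]
    (X Y : Ω → ℝ) (hMX : Measurable X) (hMY : Measurable Y)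
    (hindep : IndepFun X Y μ)
    (ν : ℝ) (hν : 0 < ν) (v : ℝ≥0) (hv : 0 < v)
    (hX : μ.map X = studentTMeasure ν)
    (hY : μ.map Y = gaussianReal 0 v) :
    ∀ ν' : ℝ, 0 < ν' → μ.map (fun ω => X ω + Y ω) ≠ studentTMeasure ν' := by
  intro ν' hν' hZ
  have hZν : upperTail (μ.map fun ω => X ω + Y ω) =Θ[atTop] fun x => x ^ (-ν) :=
    upperTail_map_add_isTheta hMX hMY hindep (hX ▸ upperTail_studentTMeasure_isTheta hν)
      (hY ▸ upperTail_gaussianReal_isBigO 0 v _)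
  obtain rfl : ν = ν' := neg_inj.1 <| isTheta_rpow_atTop_iff.1 <|
    hZν.symm.trans (hZ ▸ upperTail_studentTMeasure_isTheta hν')
  have := Measure.isProbabilityMeasure_map (μ := μ) hMX.aemeasurable
  refine conv_gaussianReal_ne_self (μ.map X) 0 hv.ne' ?_
  rw [← hY, ← hindep.map_add_eq_map_conv_map hMX hMY]
  exact hZ.trans hX.symm
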